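/- arXiv:2305.03181 — 4 statements merged into one kernel-verified Lean document; each statement's English description precedes it below -/
import Mathlib

section
/- If there exists a strong sequence (S_α, H_α)_{α < (κ^λ)^+} over a family B ⊆ P(X) closed under finite intersections, with |H_α| ≤ κ for all α < (κ^λ)^+, then B contains a subfamily of cardinality λ^+ consisting of pairwise disjoint sets. -/
open Cardinal

/-- A family of sets is centered if every finite subfamily has nonempty intersection. -/
def Centered {X : Type u} (F : Set (Set X)) : Prop :=
  ∀ G : Finset (Set X), ↑G ⊆ F → (⋂₀ (↑G : Set (Set X))).Nonempty

section Hist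
universe u
variable {I : Type u} {J : Type u} [LinearOrder I] [LinearOrder J]
  [WellFoundedLT I] [WellFoundedLT J]

def histCond {V : Type u} (c : I → I → V) (p : I) (g : J → I) (i : J) : Set I :=
  {x : I | (∀ j : J, j < i → g j < x ∧ c (g j) x = c (g j) p) ∨ x = p}

noncomputable def hist {V : Type u} (c : I → I → V) (p : I) : J → I :=
  WellFounded.fix (wellFounded_lt) fun i rec =>
    (wellFounded_lt (α := I)).min
      {x : I | (∀ j : J, ∀ h : j < i, rec j h < x ∧ c (rec j h) x = c (rec j h) p) ∨ x = p}
      ⟨p, Or.inr rfl⟩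

theorem hist_eq {V : Type u} (c : I → I → V) (p : I) (i : J) :
    hist c p i = (wellFounded_lt (α := I)).min (histCond c p (hist c p) i)
      ⟨p, Or.inr rfl⟩ := by
  show WellFounded.fix _ _ i = _
  rw [WellFounded.fix_eq]
  rfl

theorem hist_le {V : Type u} (c : I → I → V) (p : I) (i : J) : hist c p i ≤ p := by
  rw [hist_eq]
  exact not_lt.mp (WellFounded.not_lt_min _ _ (x := p) (Or.inr rfl))

theorem hist_mem {V : Type u} (c : I → I → V) (p : I) (i : J) :
    hist c p i ∈ histCond c p (hist c p) i := by
  rw [hist_eq]; exact WellFounded.min_mem _ _ _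

theorem hist_min {V : Type u} (c : I → I → V) (p : I) (i : J) {x : I}
    (hx : x ∈ histCond c p (hist c p) i) : hist c p i ≤ x := by
  rw [hist_eq]; exact not_lt.mp (WellFounded.not_lt_min _ _ hx)

/-- Core Erdős–Rado-style dichotomy. -/
theorem hist_core {K : Type u} {V : Type u} (c : I → I → V) (code : I → I → K)
    (hcode : ∀ α p q : I, α < p → α < q → code α p = code α q → c α p = c α q) :
    (∃ p : I, ∃ x : J → I, StrictMono x ∧ (∀ i, x i < p) ∧
      ∀ i j : J, i < j → c (x i) (x j) = c (x i) p) ∨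
    Nonempty (I ↪ Σ i : J, ({j : J // j < i} → K)) := by
  classical
  by_cases hstop : ∀ p : I, ∃ i : J, hist c p i = p
  · right
    have wfJ : WellFounded ((· < ·) : J → J → Prop) := wellFounded_lt
    set ip : I → J := fun p => wfJ.min {i | hist c p i = p} (hstop p) with hip_def
    have hip : ∀ p, hist c p (ip p) = p := fun p => wfJ.min_mem _ (hstop p)
    have hip_min : ∀ p, ∀ j : J, j < ip p → hist c p j ≠ p := by
      intro p j hj h
      exact wfJ.not_lt_min _ h hj
    have hlt : ∀ p, ∀ j : J, j < ip p → hist c p j < p := fun p j hj =>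
      lt_of_le_of_ne (hist_le c p j) (hip_min p j hj)
    refine ⟨⟨fun p => ⟨ip p, fun j => code (hist c p j.1) p⟩, ?_⟩⟩
    intro p q hpq
    have h1 : ip p = ip q := congrArg Sigma.fst hpq
    have key : ∀ j : J, j < ip p → code (hist c p j) p = code (hist c q j) q := by
      intro j hj
      have hj' : j < ip q := h1 ▸ hj
      have h2 := congrArg (fun s : Σ i : J, ({j : J // j < i} → K) =>
        if h : j < s.1 then some (s.2 ⟨j, h⟩) else none) hpq
      simp only at h2
      rw [dif_pos hj, dif_pos hj'] at h2
      exact Option.some.inj h2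
    have main : ∀ j : J, j ≤ ip p → hist c p j = hist c q j := by
      intro j
      induction j using WellFoundedLT.induction with
      | ind j IH =>
        intro hj
        have hcolor : ∀ j' : J, j' < j → c (hist c p j') p = c (hist c p j') q := by
          intro j' hj'
          have hj'p : j' < ip p := lt_of_lt_of_le hj' hj
          have hj'q : j' < ip q := h1 ▸ hj'p
          have heq : hist c p j' = hist c q j' := IH j' hj' (le_of_lt hj'p)
          have hk := key j' hj'p
          rw [← heq] at hk
          exact hcode _ p q (hlt p j' hj'p) (heq ▸ hlt q j' hj'q) hk
        have hAiff : ∀ x : I,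
            ((∀ j' : J, j' < j → hist c p j' < x ∧ c (hist c p j') x = c (hist c p j') p) ↔
             (∀ j' : J, j' < j → hist c q j' < x ∧ c (hist c q j') x = c (hist c q j') q)) := by
          intro x
          constructor
          · intro hA j' hj'
            have heq : hist c p j' = hist c q j' := IH j' hj' (le_of_lt (lt_of_lt_of_le hj' hj))
            rw [← heq, (hA j' hj').2, hcolor j' hj']
            exact ⟨(hA j' hj').1, rfl⟩
          · intro hA j' hj'
            have heq : hist c p j' = hist c q j' := IH j' hj' (le_of_lt (lt_of_lt_of_le hj' hj))
            rw [heq, (hA j' hj').2, ← heq, ← hcolor j' hj', heq]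
            exact ⟨(hA j' hj').1, rfl⟩
        rcases lt_or_eq_of_le hj with hjlt | hjeq
        · have hjltq : j < ip q := h1 ▸ hjlt
          have hpmem : (∀ j' : J, j' < j → hist c p j' < hist c p j ∧
              c (hist c p j') (hist c p j) = c (hist c p j') p) := by
            rcases hist_mem c p j with hA | hP
            · exact hA
            · exact absurd hP (hip_min p j hjlt)
          have hqmem : (∀ j' : J, j' < j → hist c q j' < hist c q j ∧
              c (hist c q j') (hist c q j) = c (hist c q j') q) := by
            rcases hist_mem c q j with hA | hP
            · exact hA
            · exact absurd hP (hip_min q j hjltq)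
          have h1' : hist c p j ≤ hist c q j :=
            hist_min c p j (Or.inl ((hAiff _).mpr hqmem))
          have h2' : hist c q j ≤ hist c p j :=
            hist_min c q j (Or.inl ((hAiff _).mp hpmem))
          exact le_antisymm h1' h2'
        · subst hjeq
          have hjq : ip p = ip q := h1
          have hpq' : p = q := by
            have hpmem : p ∈ histCond c q (hist c q) (ip p) := by
              left
              intro j' hj'
              have heq : hist c p j' = hist c q j' := IH j' hj' (le_of_lt hj')
              constructor
              · rw [← heq]; exact hlt p j' hj'
              · rw [← heq, hcolor j' hj']
            have hqmem : q ∈ histCond c p (hist c p) (ip p) := by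
              left
              intro j' hj'
              have heq : hist c p j' = hist c q j' := IH j' hj' (le_of_lt hj')
              constructor
              · rw [heq]; exact hlt q j' (hjq ▸ hj')
              · rw [← hcolor j' hj']
            have e1 : hist c p (ip p) ≤ q := hist_min c p (ip p) hqmem
            have e2 : hist c q (ip p) ≤ p := hist_min c q (ip p) hpmem
            rw [hip p] at e1
            rw [hjq, hip q] at e2
            exact le_antisymm e1 e2
          rw [hpq']
    have := main (ip p) le_rfl
    rw [hip p, h1, hip q] at this
    exact this
  · left
    push_neg at hstop
    obtain ⟨p, hp⟩ := hstop
    have hlt : ∀ i : J, hist c p i < p := fun i =>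
      lt_of_le_of_ne (hist_le c p i) (hp i)
    have hmem : ∀ i : J, ∀ j : J, j < i → hist c p j < hist c p i ∧
        c (hist c p j) (hist c p i) = c (hist c p j) p := by
      intro i
      rcases hist_mem c p i with hA | hP
      · exact hA
      · exact absurd hP (hp i)
    exact ⟨p, hist c p, fun i j hij => (hmem j i hij).1, hlt,
      fun i j hij => (hmem j i hij).2⟩
end Hist


theorem sInterFinsetMem {X : Type u} {B : Set (Set X)}
    (hBcap : ∀ b ∈ B, ∀ c ∈ B, b ∩ c ∈ B)
    (F : Finset (Set X)) (hne : F.Nonempty) :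
    ↑F ⊆ B → ⋂₀ (↑F : Set (Set X)) ∈ B := by
  induction hne using Finset.Nonempty.cons_induction with
  | singleton a =>
    intro hsub
    simpa using hsub (by simp)
  | cons a s ha hs ih =>
    intro hsub
    have haB : a ∈ B := hsub (by simp)
    have hsB : (↑s : Set (Set X)) ⊆ B := fun x hx => hsub (by simp [hx])
    have := hBcap a haB _ (ih hsB)
    simpa [Finset.coe_cons, Set.sInter_insert] using this

/-- Turzański's theorem on strong sequences: if there is a strong sequence
`(S_α, H_α)_{α < (κ^λ)⁺}` over a family `B` of nonempty sets closed under finite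
intersections, with `|H_α| ≤ κ`, then `B` contains `λ⁺` many pairwise disjoint sets. -/
theorem strong_sequence_disjoint_subfamily {X : Type u} (B : Set (Set X))
    (hBne : ∀ b ∈ B, b.Nonempty)
    (hBcap : ∀ b ∈ B, ∀ c ∈ B, b ∩ c ∈ B)
    (κ lam : Cardinal.{u}) (hκ : ℵ₀ ≤ κ) (hlam : ℵ₀ ≤ lam)
    (S H : (Order.succ (κ ^ lam)).ord.ToType → Set (Set X))
    (hSB : ∀ α, S α ⊆ B) (hSfin : ∀ α, (S α).Finite)
    (hHB : ∀ α, H α ⊆ B)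
    (hHcard : ∀ α, #(H α) ≤ κ)
    (hcent : ∀ α, Centered (S α ∪ H α))
    (hstrong : ∀ α β, α < β → ¬ Centered (S β ∪ H α)) :
    ∃ D ⊆ B, #D = Order.succ lam ∧ D.Pairwise Disjoint := by
  classical
  -- Step 1: choose the "bad" finite subsets of H α witnessing non-centeredness.
  have hFc : ∀ α β, α < β → ∃ F : Finset (Set X), ↑F ⊆ H α ∧ F.Nonempty ∧
      ⋂₀ (S β) ∩ ⋂₀ (↑F : Set (Set X)) = ∅ := by
    intro α β hαβ
    have hnc := hstrong α β hαβ
    rw [Centered] at hnc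
    push_neg at hnc
    obtain ⟨G, hGsub, hGne⟩ := hnc
    set F := G.filter (· ∈ H α) with hFdef
    have hkey : ⋂₀ (S β) ∩ ⋂₀ (↑F : Set (Set X)) ⊆ ⋂₀ (↑G : Set (Set X)) := by
      rintro x ⟨hx1, hx2⟩ g hg
      have hg' : g ∈ G := hg
      rcases hGsub hg with h | h
      · exact hx1 _ h
      · exact hx2 _ (Finset.mem_coe.mpr (Finset.mem_filter.mpr ⟨hg', h⟩))
    have hFsub : (↑F : Set (Set X)) ⊆ H α := by
      intro s hs
      simp only [hFdef, Finset.coe_filter, Set.mem_setOf_eq] at hs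
      exact hs.2
    have hempty : ⋂₀ (S β) ∩ ⋂₀ (↑F : Set (Set X)) = ∅ :=
      Set.subset_empty_iff.mp (hGne ▸ hkey)
    refine ⟨F, hFsub, ?_, hempty⟩
    by_contra hemp
    rw [Finset.not_nonempty_iff_eq_empty] at hemp
    have hSb : ⋂₀ (S β) = ∅ := by
      have := hempty
      rw [hemp] at this
      simpa using this
    have hc := hcent β ((hSfin β).toFinset)
      (by rw [Set.Finite.coe_toFinset]; exact Set.subset_union_left)
    rw [Set.Finite.coe_toFinset, hSb] at hc
    exact Set.not_nonempty_empty hc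
  choose Fc hFc1 hFc2 hFc3 using hFc
  -- the color function
  set t : _ → _ → Set X := fun α β => if h : α < β then ⋂₀ ↑(Fc α β h) else ∅ with htdef
  -- Step 2: coding the colors into K
  have hcard : ∀ α, #{F : Finset (Set X) // ↑F ⊆ H α} ≤ κ := by
    intro α
    have hinj : Function.Injective (fun F : {F : Finset (Set X) // ↑F ⊆ H α} =>
        F.1.subtype (· ∈ H α)) := by
      intro F F' h
      apply Subtype.ext
      have h1 := congrArg (Finset.map (Function.Embedding.subtype (· ∈ H α))) h
      simp only [Finset.subtype_map] at h1
      rwa [Finset.filter_true_of_mem (fun x hx => F.2 (Finset.mem_coe.mpr hx)),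
        Finset.filter_true_of_mem (fun x hx => F'.2 (Finset.mem_coe.mpr hx))] at h1
    have h1 : #{F : Finset (Set X) // ↑F ⊆ H α} ≤ #(Finset (↥(H α))) :=
      Cardinal.mk_le_of_injective hinj
    refine h1.trans ?_
    rcases finite_or_infinite (↥(H α)) with hfin | hinf
    · haveI := Fintype.ofFinite (↥(H α))
      exact (Cardinal.lt_aleph0_of_finite _).le.trans hκ
    · rw [Cardinal.mk_finset_of_infinite]
      exact hHcard α
  have hK : #(κ.ord.ToType) = κ := mk_ord_toType κ
  haveI hKne : Nonempty (κ.ord.ToType) := Cardinal.mk_ne_zero_iff.mp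
    (by rw [hK]; exact (aleph0_pos.trans_le hκ).ne')
  have hemb : ∀ α, ∃ e : {F : Finset (Set X) // ↑F ⊆ H α} → κ.ord.ToType, Function.Injective e := by
    intro α
    have hle : #{F : Finset (Set X) // ↑F ⊆ H α} ≤ #(κ.ord.ToType) := by rw [hK]; exact hcard α
    obtain ⟨e⟩ := (Cardinal.le_def _ _).mp hle
    exact ⟨e, e.injective⟩
  choose e he using hemb
  set code : _ → _ → κ.ord.ToType := fun α β =>
    if h : α < β then e α ⟨Fc α β h, hFc1 α β h⟩ else Classical.arbitrary _ with hcodedef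
  have hcode : ∀ α p q, α < p → α < q → code α p = code α q → t α p = t α q := by
    intro α p q hp hq hc
    simp only [hcodedef, dif_pos hp, dif_pos hq] at hc
    have hFeq : Fc α p hp = Fc α q hq := congrArg Subtype.val (he α hc)
    simp only [htdef, dif_pos hp, dif_pos hq, hFeq]
  -- Step 3: apply the dichotomy
  rcases hist_core (J := (Order.succ lam).ord.ToType) t code hcode with ⟨p, x, hmono, hxp, hcolor⟩ | hΦ
  · -- build the disjoint family
    set F2 : _ → Finset (Set X) := fun i =>
      (hSfin (x i)).toFinset ∪ Fc (x i) p (hxp i) with hF2def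
    have hF2coe : ∀ i, (↑(F2 i) : Set (Set X)) = S (x i) ∪ ↑(Fc (x i) p (hxp i)) := by
      intro i
      simp [hF2def, Set.Finite.coe_toFinset]
    have hF2sub : ∀ i, (↑(F2 i) : Set (Set X)) ⊆ S (x i) ∪ H (x i) := by
      intro i
      rw [hF2coe i]
      exact Set.union_subset Set.subset_union_left
        ((hFc1 (x i) p (hxp i)).trans Set.subset_union_right)
    have hF2B : ∀ i, (↑(F2 i) : Set (Set X)) ⊆ B := by
      intro i
      rw [hF2coe i]
      exact Set.union_subset (hSB (x i)) ((hFc1 (x i) p (hxp i)).trans (hHB (x i)))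
    have hF2ne : ∀ i, (F2 i).Nonempty := by
      intro i
      exact (hFc2 (x i) p (hxp i)).mono Finset.subset_union_right
    set d : _ → Set X := fun i => ⋂₀ (↑(F2 i) : Set (Set X)) with hddef
    have hdB : ∀ i, d i ∈ B := fun i => sInterFinsetMem hBcap (F2 i) (hF2ne i) (hF2B i)
    have hdne : ∀ i, (d i).Nonempty := fun i => hcent (x i) (F2 i) (hF2sub i)
    have hdeq : ∀ i, d i = ⋂₀ (S (x i)) ∩ ⋂₀ (↑(Fc (x i) p (hxp i)) : Set (Set X)) := by
      intro i
      rw [hddef]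
      simp only
      rw [hF2coe i, Set.sInter_union]
    have hdisj : ∀ i j, i < j → Disjoint (d i) (d j) := by
      intro i j hij
      rw [Set.disjoint_iff_inter_eq_empty]
      have hc1 : t (x i) (x j) = t (x i) p := hcolor i j hij
      have hxij : x i < x j := hmono hij
      have ht1 : t (x i) (x j) = ⋂₀ (↑(Fc (x i) (x j) hxij) : Set (Set X)) := by
        simp only [htdef, dif_pos hxij]
      have ht2 : t (x i) p = ⋂₀ (↑(Fc (x i) p (hxp i)) : Set (Set X)) := by
        simp only [htdef, dif_pos (hxp i)]
      apply Set.subset_empty_iff.mp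
      intro y hy
      have hy1 : y ∈ ⋂₀ (↑(Fc (x i) (x j) hxij) : Set (Set X)) := by
        rw [← ht1, hc1, ht2]
        exact ((hdeq i ▸ hy.1).2)
      have hy2 : y ∈ ⋂₀ (S (x j)) := (hdeq j ▸ hy.2).1
      have := hFc3 (x i) (x j) hxij
      rw [← this]
      exact ⟨hy2, hy1⟩
    have hdinj : Function.Injective d := by
      intro i j hij
      by_contra hne
      rcases lt_or_gt_of_ne hne with h | h
      · have hd := hdisj i j h
        rw [hij] at hd
        exact Set.not_nonempty_empty ((disjoint_self.mp hd) ▸ hdne j)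
      · have hd := hdisj j i h
        rw [hij] at hd
        exact Set.not_nonempty_empty ((disjoint_self.mp hd) ▸ hdne j)
    refine ⟨Set.range d, ?_, ?_, ?_⟩
    · rintro _ ⟨i, rfl⟩
      exact hdB i
    · rw [Cardinal.mk_range_eq d hdinj, mk_ord_toType]
    · rintro _ ⟨i, rfl⟩ _ ⟨j, rfl⟩ hne
      rcases lt_trichotomy i j with h | h | h
      · exact hdisj i j h
      · exact absurd (congrArg d h) hne
      · exact (hdisj j i h).symm
  · -- cardinality contradiction
    exfalso
    obtain ⟨Φ⟩ := hΦ
    have h1 : #((Order.succ (κ ^ lam)).ord.ToType) ≤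
        #(Σ i : (Order.succ lam).ord.ToType, ({j // j < i} → κ.ord.ToType)) :=
      Cardinal.mk_le_of_injective Φ.injective
    have hb : ∀ i : (Order.succ lam).ord.ToType, #({j // j < i} → κ.ord.ToType) ≤ κ ^ lam := by
      intro i
      letI : IsWellOrder (Order.succ lam).ord.ToType (· < ·) := isWellOrder_lt
      rw [← Cardinal.power_def, hK]
      apply Cardinal.power_le_power_left (aleph0_pos.trans_le hκ).ne'
      have h3 : #{j // j < i} = (Ordinal.typein (· < ·) i).card :=
        Ordinal.card_typein i
      have h4 : Ordinal.typein (· < ·) i < (Order.succ lam).ord :=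
        (Ordinal.typein_lt_type _ i).trans_eq (Ordinal.type_toType _)
      rw [h3]
      exact Order.lt_succ_iff.mp (Cardinal.lt_ord.mp h4)
    have h2 : #(Σ i : (Order.succ lam).ord.ToType, ({j // j < i} → κ.ord.ToType)) ≤ κ ^ lam := by
      rw [Cardinal.mk_sigma]
      calc Cardinal.sum (fun i : (Order.succ lam).ord.ToType => #({j // j < i} → κ.ord.ToType))
          ≤ Cardinal.sum (fun _ : (Order.succ lam).ord.ToType => κ ^ lam) :=
            Cardinal.sum_le_sum _ _ hb
        _ = #((Order.succ lam).ord.ToType) * (κ ^ lam) := Cardinal.sum_const' _ _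
        _ ≤ (κ ^ lam) * (κ ^ lam) := by
            apply mul_le_mul_left
            rw [mk_ord_toType]
            calc Order.succ lam ≤ 2 ^ lam := Order.succ_le_of_lt (Cardinal.cantor lam)
              _ ≤ κ ^ lam := Cardinal.power_le_power_right
                  (le_trans (by exact_mod_cast (Cardinal.nat_lt_aleph0 2).le) hκ)
        _ = κ ^ lam := Cardinal.mul_eq_self
            (le_trans hκ (Cardinal.self_le_power κ (le_trans (by norm_num) hlam)))
    have h5 : Order.succ (κ ^ lam) ≤ κ ^ lam := by
      have h6 : #((Order.succ (κ ^ lam)).ord.ToType) = Order.succ (κ ^ lam) := mk_ord_toType _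
      rw [← h6]
      exact h1.trans h2
    exact (Order.lt_succ (κ ^ lam)).not_ge h5
end

section
/- For every infinite cardinal κ, every 2-coloring c : [κ]^2 → 2 either admits a subset of κ of cardinality κ all of whose 2-element subsets receive color 0, or a subset of order type ω all of whose 2-element subsets receive color 1. In array notation: κ → (κ, ω)^2. -/
/-!
Read the colouring as the graph of pairs of colour 1; if it has no infinite clique we look for an
independent set of size `κ`. Repeatedly passing to the neighbourhood of a vertex of degree `κ`
would build an infinite clique, so some `S` of size `κ` has all degrees inside `S` below `κ`.
If `κ` is regular, a maximal independent subset of `S` has size `κ`, because `S` is covered by it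
together with its neighbourhoods. If `κ` is singular, fix regular cardinals `f j < κ` cofinal in
`κ`, indexed by `j < cf κ`. By transfinite recursion choose, for each `j`, an independent set of
size `f j` consisting of vertices of degree at most some `f i`, avoiding the neighbourhoods of all
earlier choices; these form fewer than `cf κ` sets of size `< κ`, so there is room at each stage,
and the union of all choices is independent of size `κ`.
-/

open Cardinal Set

universe u

namespace Cardinal

theorem mk_iUnion_lt_of_lt_cof_ord {ι α : Type u} {κ : Cardinal.{u}} (hκ : ℵ₀ ≤ κ)
    {f : ι → Set α} (hι : #ι < κ.ord.cof) (hf : ∀ i, #(f i) < κ) : #(⋃ i, f i) < κ :=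
  (mk_iUnion_le f).trans_lt <|
    mul_lt_of_lt hκ (hι.trans_le (Ordinal.cof_ord_le κ)) (iSup_lt_of_lt_cof_ord hι hf)

theorem IsSingular.exists_isRegular_cofinal {κ : Cardinal.{u}} (hκ : κ.IsSingular) :
    ∃ f : κ.ord.cof.ord.ToType → Cardinal.{u},
      (∀ j, (f j).IsRegular ∧ f j < κ) ∧ ∀ μ < κ, ∃ j, μ ≤ f j := by
  obtain ⟨g, hg⟩ := Ordinal.exists_isFundamentalSeq (o := κ.ord) rfl
  have hℵ₀ : ℵ₀ < κ := hκ.aleph0_le.lt_of_ne fun h => not_isSingular_aleph0 (h ▸ hκ)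
  refine ⟨fun j => Order.succ (ℵ₀ ⊔ (g (Ordinal.ToType.mk.symm j)).1.card),
    fun j => ⟨isRegular_succ le_sup_left,
      hκ.isSuccLimit.succ_lt (max_lt hℵ₀ (lt_ord.1 (g _).2))⟩, fun μ hμ => ?_⟩
  obtain ⟨_, ⟨i, rfl⟩, hi⟩ := hg.isCofinal_range ⟨μ.ord, ord_lt_ord.2 hμ⟩
  refine ⟨Ordinal.ToType.mk i, ?_⟩
  simp only [OrderIso.symm_apply_apply]
  calc μ = μ.ord.card := (card_ord μ).symm
    _ ≤ (g i).1.card := Ordinal.card_le_card hi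
    _ ≤ _ := le_sup_right.trans (Order.le_succ _)

theorem exists_family_disjoint_iUnion_Iio {α J : Type u} [LinearOrder J] [WellFoundedLT J]
    {κ : Cardinal.{u}} (hκ : ℵ₀ ≤ κ) (hJ : ∀ j : J, #(Iio j) < κ.ord.cof)
    (P : J → Set α → Prop) (cl : Set α → Set α)
    (hP : ∀ j (W : Set α), #W < κ → ∃ M, P j M ∧ Disjoint M W ∧ #(cl M) < κ) :
    ∃ M : J → Set α, ∀ j, P j (M j) ∧ Disjoint (M j) (⋃ k : Iio j, cl (M k)) := by
  -- a total choice function, so that the recursion below need not carry smallness proofs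
  have hP' : ∀ j (W : Set α), ∃ M, #W < κ → P j M ∧ Disjoint M W ∧ #(cl M) < κ := by
    intro j W
    by_cases hW : #W < κ
    · obtain ⟨M, hM⟩ := hP j W hW
      exact ⟨M, fun _ => hM⟩
    · exact ⟨∅, fun h => absurd h hW⟩
  choose F hF using hP'
  let M : J → Set α := wellFounded_lt.fix fun j M => F j (⋃ k : Iio j, cl (M k k.2))
  have hM : ∀ j, M j = F j (⋃ k : Iio j, cl (M k.1)) := wellFounded_lt.fix_eq _
  have hsmall : ∀ j, #(⋃ k : Iio j, cl (M k.1)) < κ := by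
    intro j
    induction j using WellFoundedLT.induction with | ind j ih =>
    refine mk_iUnion_lt_of_lt_cof_ord hκ (hJ j) fun k => ?_
    rw [hM k]
    exact (hF _ _ (ih k k.2)).2.2
  refine ⟨M, fun j => ?_⟩
  rw [hM j]
  exact ⟨(hF _ _ (hsmall j)).1, (hF _ _ (hsmall j)).2.1⟩

end Cardinal

namespace SimpleGraph

variable {V : Type u} (G : SimpleGraph V)

theorem exists_isIndepSet_subset_forall_adj (S : Set V) :
    ∃ M ⊆ S, G.IsIndepSet M ∧ ∀ y ∈ S \ M, ∃ x ∈ M, G.Adj x y := by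
  obtain ⟨M, ⟨hMS, hM⟩, hmax⟩ := zorn_subset {M | M ⊆ S ∧ G.IsIndepSet M} fun C hC hchain =>
    ⟨⋃₀ C, ⟨sUnion_subset fun M hM => (hC hM).1, hchain.pairwise_sUnion.2 fun M hM => (hC hM).2⟩,
      fun _ => subset_sUnion_of_mem⟩
  refine ⟨M, hMS, hM, fun y ⟨hyS, hyM⟩ => ?_⟩
  by_contra! hy
  have hyM' : G.IsIndepSet (insert y M) :=
    hM.insert fun x hx _ => ⟨fun h => hy x hx h.symm, hy x hx⟩
  exact hyM (hmax ⟨insert_subset hyS hMS, hyM'⟩ (subset_insert y M) (mem_insert y M))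

theorem exists_isClique_infinite_of_forall_exists {P : Set V → Prop} {S : Set V} (hS : P S)
    (h : ∀ T, P T → ∃ y ∈ T, P (G.neighborSet y ∩ T)) : ∃ s, G.IsClique s ∧ s.Infinite := by
  choose y hyT hyP using h
  let T : ℕ → {T // P T} := fun n => n.rec ⟨S, hS⟩ fun _ T => ⟨_, hyP T.1 T.2⟩
  let x : ℕ → V := fun n => y (T n).1 (T n).2
  have hanti : Antitone fun n => (T n).1 := antitone_nat_of_succ_le fun n => inter_subset_right
  have hlt : ∀ ⦃m n⦄, m < n → G.Adj (x m) (x n) := fun m n hmn =>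
    (hanti (Nat.succ_le_of_lt hmn) (hyT _ (T n).2)).1
  have hadj : Pairwise fun m n => G.Adj (x m) (x n) := fun m n hne =>
    hne.lt_or_gt.elim (hlt ·) fun h => (hlt h).symm
  exact ⟨range x, hadj.range_pairwise,
    infinite_range_of_injective fun m n h => of_not_not fun hne => (hadj hne).ne h⟩

variable {G} {κ : Cardinal.{u}} {S : Set V}

theorem exists_isIndepSet_of_isRegular_of_forall_mk_lt (hκ : κ.IsRegular) (hS : κ ≤ #S)
    (hdeg : ∀ y ∈ S, #(G.neighborSet y ∩ S : Set V) < κ) :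
    ∃ M ⊆ S, G.IsIndepSet M ∧ κ ≤ #M := by
  obtain ⟨M, hMS, hM, hcover⟩ := G.exists_isIndepSet_subset_forall_adj S
  refine ⟨M, hMS, hM, not_lt.1 fun hMκ => hS.not_gt ?_⟩
  have hsub : S ⊆ M ∪ ⋃ x : M, G.neighborSet x ∩ S := fun y hy => by
    by_cases hyM : y ∈ M
    · exact Or.inl hyM
    · obtain ⟨x, hx, hxy⟩ := hcover y ⟨hy, hyM⟩
      exact Or.inr (mem_iUnion.2 ⟨⟨x, hx⟩, hxy, hy⟩)
  refine (mk_le_mk_of_subset hsub).trans_lt <| (mk_union_le _ _).trans_lt <|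
    add_lt_of_lt hκ.aleph0_le hMκ ?_
  exact mk_iUnion_lt_of_lt_cof_ord hκ.aleph0_le (hκ.cof_ord.symm ▸ hMκ) fun x => hdeg x (hMS x.2)

theorem exists_subset_forall_mk_neighborSet_inter_lt (hG : ∀ s, G.IsClique s → s.Finite)
    (hS : κ ≤ #S) : ∃ T ⊆ S, κ ≤ #T ∧ ∀ y ∈ T, #(G.neighborSet y ∩ T : Set V) < κ := by
  by_contra! h
  obtain ⟨s, hs, hinf⟩ := G.exists_isClique_infinite_of_forall_exists
    (P := fun T => T ⊆ S ∧ κ ≤ #T) ⟨subset_rfl, hS⟩ fun T ⟨hTS, hT⟩ => by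
      obtain ⟨y, hyT, hy⟩ := h T hTS hT
      exact ⟨y, hyT, inter_subset_right.trans hTS, hy⟩
  exact hinf (hG s hs)

theorem exists_isIndepSet_of_isRegular (hG : ∀ s, G.IsClique s → s.Finite) (hκ : κ.IsRegular)
    (hS : κ ≤ #S) : ∃ M ⊆ S, G.IsIndepSet M ∧ κ ≤ #M := by
  obtain ⟨T, hTS, hT, hdeg⟩ := exists_subset_forall_mk_neighborSet_inter_lt hG hS
  obtain ⟨M, hMT, hM, hMκ⟩ := exists_isIndepSet_of_isRegular_of_forall_mk_lt hκ hT hdeg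
  exact ⟨M, hMT.trans hTS, hM, hMκ⟩

theorem isIndepSet_iUnion {J : Type*} [LinearOrder J] {M : J → Set V}
    (hM : ∀ j, G.IsIndepSet (M j)) (hlt : ∀ ⦃j k⦄, j < k → ∀ x ∈ M j, ∀ y ∈ M k, ¬G.Adj x y) :
    G.IsIndepSet (⋃ j, M j) := by
  intro x hx y hy hxy
  obtain ⟨j, hxj⟩ := mem_iUnion.1 hx
  obtain ⟨k, hyk⟩ := mem_iUnion.1 hy
  rcases lt_trichotomy j k with hjk | rfl | hkj
  · exact hlt hjk x hxj y hyk
  · exact hM j hxj hyk hxy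
  · exact fun h => hlt hkj y hyk x hxj h.symm

theorem exists_isIndepSet_disjoint_of_forall_mk_lt (hG : ∀ s, G.IsClique s → s.Finite)
    (hκ : ℵ₀ ≤ κ) (hS : κ ≤ #S) (hdeg : ∀ y ∈ S, #(G.neighborSet y ∩ S : Set V) < κ)
    {J : Type u} {f : J → Cardinal.{u}} (hJ : #J < κ) (hfκ : ∀ j, f j < κ)
    (hf : ∀ μ < κ, ∃ j, μ ≤ f j) {μ : Cardinal.{u}} (hμ : μ.IsRegular) (hμκ : μ < κ)
    {W : Set V} (hW : #W < κ) :
    ∃ M ⊆ S, G.IsIndepSet M ∧ #M = μ ∧ Disjoint M W ∧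
      #(⋃ x ∈ M, G.neighborSet x ∩ S : Set V) < κ := by
  have hSW : κ ≤ #(S \ W : Set V) := by
    by_contra! h
    exact hS.not_gt ((le_mk_sdiff_add_mk S W).trans_lt (add_lt_of_lt hκ h hW))
  let T : J → Set V := fun j => {y ∈ S \ W | #(G.neighborSet y ∩ S : Set V) ≤ f j}
  obtain ⟨j, hj⟩ : ∃ j, μ ≤ #(T j) := by
    by_contra! h
    have hcover : S \ W ⊆ ⋃ j, T j := fun y hy => by
      obtain ⟨j, hj⟩ := hf _ (hdeg y hy.1)
      exact mem_iUnion.2 ⟨j, hy, hj⟩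
    refine hSW.not_gt <| (mk_le_mk_of_subset hcover).trans_lt <| (mk_iUnion_le T).trans_lt <|
      mul_lt_of_lt hκ hJ ((ciSup_le' fun j => (h j).le).trans_lt hμκ)
  obtain ⟨M₁, hM₁T, hM₁, hμM₁⟩ := exists_isIndepSet_of_isRegular hG hμ hj
  obtain ⟨M, hMM₁, hMμ⟩ := le_mk_iff_exists_subset.1 hμM₁
  have hMT : M ⊆ T j := hMM₁.trans hM₁T
  refine ⟨M, fun x hx => (hMT hx).1.1, hM₁.mono hMM₁, hMμ,
    Set.disjoint_left.2 fun x hx => (hMT hx).1.2, ?_⟩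
  calc #(⋃ x ∈ M, G.neighborSet x ∩ S : Set V)
      ≤ #M * ⨆ x : M, #(G.neighborSet x ∩ S : Set V) := mk_biUnion_le _ M
    _ ≤ μ * f j := mul_le_mul' hMμ.le (ciSup_le' fun x => (hMT x.2).2)
    _ < κ := mul_lt_of_lt hκ hμκ (hfκ j)

theorem exists_isIndepSet_of_isSingular (hG : ∀ s, G.IsClique s → s.Finite)
    (hκ : κ.IsSingular) (hS : κ ≤ #S) : ∃ M ⊆ S, G.IsIndepSet M ∧ κ ≤ #M := by
  obtain ⟨T, hTS, hT, hdeg⟩ := exists_subset_forall_mk_neighborSet_inter_lt hG hS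
  obtain ⟨f, hfreg, hf⟩ := hκ.exists_isRegular_cofinal
  have hJ : #(κ.ord.cof.ord.ToType) < κ := by
    rw [mk_ord_toType]
    exact hκ.cof_ord_lt
  obtain ⟨M, hM⟩ := exists_family_disjoint_iUnion_Iio hκ.aleph0_le
    (fun j => by simpa using mk_Iio_lt j)
    (fun j M => M ⊆ T ∧ G.IsIndepSet M ∧ #M = f j) (fun M => ⋃ x ∈ M, G.neighborSet x ∩ T)
    fun j W hW => by
      obtain ⟨M, hMT, hM, hMf, hMW, hcl⟩ := exists_isIndepSet_disjoint_of_forall_mk_lt hG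
        hκ.aleph0_le hT hdeg hJ (fun j => (hfreg j).2) hf (hfreg j).1 (hfreg j).2 hW
      exact ⟨M, ⟨hMT, hM, hMf⟩, hMW, hcl⟩
  refine ⟨⋃ j, M j, iUnion_subset fun j => (hM j).1.1.trans hTS,
    isIndepSet_iUnion (fun j => (hM j).1.2.1) fun j k hjk x hx y hy hxy =>
      Set.disjoint_left.1 (hM k).2 hy <|
        mem_iUnion.2 ⟨⟨j, hjk⟩, mem_biUnion hx ⟨hxy, (hM k).1.1 hy⟩⟩,
    not_lt.1 fun hlt => ?_⟩
  -- `κ` is a limit cardinal, so even the successor of the size of the union lies below some `f j`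
  obtain ⟨j, hj⟩ := hf _ (hκ.isSuccLimit.succ_lt hlt)
  exact (Order.succ_le_iff.1 <| hj.trans <|
    (hM j).1.2.2.symm.trans_le (mk_le_mk_of_subset (subset_iUnion M j))).false

theorem exists_isIndepSet_subset_le_mk (hG : ∀ s, G.IsClique s → s.Finite) (hκ : ℵ₀ ≤ κ)
    (hS : κ ≤ #S) : ∃ M ⊆ S, G.IsIndepSet M ∧ κ ≤ #M :=
  (isRegular_or_isSingular hκ).elim (exists_isIndepSet_of_isRegular hG · hS)
    (exists_isIndepSet_of_isSingular hG · hS)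

theorem exists_isIndepSet_mk_eq (hG : ∀ s, G.IsClique s → s.Finite) (hV : ℵ₀ ≤ #V) :
    ∃ M : Set V, G.IsIndepSet M ∧ #M = #V := by
  obtain ⟨M, -, hM, hVM⟩ := exists_isIndepSet_subset_le_mk hG hV mk_univ.ge
  exact ⟨M, hM, (mk_set_le M).antisymm hVM⟩

end SimpleGraph

/-- Dushnik–Miller: for every infinite cardinal `κ`, `κ → (κ, ω)²`. -/
theorem dushnik_miller (κ : Cardinal.{u}) (hκ : ℵ₀ ≤ κ)
    (A : Type u) (hA : #A = κ) (c : Sym2 A → Fin 2) :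
    (∃ A₀ : Set A, #A₀ = κ ∧ ∀ x ∈ A₀, ∀ y ∈ A₀, x ≠ y → c s(x, y) = 0) ∨
    (∃ A₁ : Set A, #A₁ = ℵ₀ ∧ ∀ x ∈ A₁, ∀ y ∈ A₁, x ≠ y → c s(x, y) = 1) := by
  let G := SimpleGraph.fromRel fun x y : A => c s(x, y) = 1
  by_cases hG : ∀ s : Set A, G.IsClique s → s.Finite
  · obtain ⟨s, hs, hsκ⟩ := G.exists_isIndepSet_mk_eq hG (hA ▸ hκ)
    refine .inl ⟨s, hsκ.trans hA, fun x hx y hy hxy => ?_⟩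
    have : c s(x, y) ≠ 1 := fun h => hs hx hy hxy ⟨hxy, .inl h⟩
    omega
  · push Not at hG
    obtain ⟨s, hs, hinf⟩ := hG
    obtain ⟨t, hts, ht⟩ := le_mk_iff_exists_subset.1 (aleph0_le_mk_iff.2 hinf.to_subtype)
    refine .inr ⟨t, ht, fun x hx y hy hxy => ?_⟩
    obtain ⟨-, h | h⟩ := hs (hts hx) (hts hy) hxy
    · exact h
    · rwa [Sym2.eq_swap]
end

section
/- Let β, τ be regular cardinals with ω ≤ β, τ strongly β-inaccessible, and let κ < τ. Then τ → (τ, β)^2 holds: for every set A of cardinality τ and every c : [A]^2 → 2, either there is a subset of cardinality τ homogeneous in color 0, or a subset of cardinality β homogeneous in color 1. -/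
open Cardinal

/-- `τ` is strongly `β`-inaccessible (written `β ≪ τ`): `β < τ` and `α ^ λ < τ`
whenever `α < τ` and `λ < β`. -/
def StronglyBetaInaccessible (β τ : Cardinal.{u}) : Prop :=
  β < τ ∧ ∀ α < τ, ∀ lam < β, α ^ lam < τ

namespace DMAux

open Ordinal Set

universe u

instance (o : Ordinal.{u}) : IsWellOrder o.ToType (· < ·) := isWellOrder_lt

variable {A : Type u} (c : Sym2 A → Fin 2)

lemma fin2_eq_zero {a : Fin 2} (h : a ≠ 1) : a = 0 := by omega

/-- `S` is 0-homogeneous. -/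
def homog0 (S : Set A) : Prop := ∀ x ∈ S, ∀ y ∈ S, x ≠ y → c s(x, y) = 0

lemma homog0_mono {S T : Set A} (h : S ⊆ T) (hT : homog0 c T) : homog0 c S :=
  fun x hx y hy hxy => hT x (h hx) y (h hy) hxy

lemma exists_maxHom (S : Set A) :
    ∃ M, M ⊆ S ∧ homog0 c M ∧ ∀ y ∈ S, y ∉ M → ∃ x ∈ M, c s(x, y) = 1 := by
  have hz : ∀ C ⊆ {T : Set A | T ⊆ S ∧ homog0 c T}, IsChain (· ⊆ ·) C →
      ∃ ub ∈ {T : Set A | T ⊆ S ∧ homog0 c T}, ∀ s ∈ C, s ⊆ ub := by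
    intro C hC hchain
    refine ⟨⋃₀ C, ⟨Set.sUnion_subset fun T hT => (hC hT).1, ?_⟩,
      fun s hs => Set.subset_sUnion_of_mem hs⟩
    intro x hx y hy hxy
    obtain ⟨T1, hT1, hxT1⟩ := hx
    obtain ⟨T2, hT2, hyT2⟩ := hy
    rcases hchain.total hT1 hT2 with h | h
    · exact (hC hT2).2 x (h hxT1) y hyT2 hxy
    · exact (hC hT1).2 x hxT1 y (h hyT2) hxy
  obtain ⟨M, hM⟩ := zorn_subset {T : Set A | T ⊆ S ∧ homog0 c T} hz
  · refine ⟨M, hM.prop.1, hM.prop.2, ?_⟩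
    intro y hyS hyM
    by_contra hcon
    push_neg at hcon
    have hins : insert y M ∈ {T : Set A | T ⊆ S ∧ homog0 c T} := by
      constructor
      · exact Set.insert_subset hyS hM.prop.1
      · intro a ha b hb hab
        rcases Set.mem_insert_iff.mp ha with ha' | ha'
        · rcases Set.mem_insert_iff.mp hb with hb' | hb'
          · exact absurd (ha'.trans hb'.symm) hab
          · subst ha'
            have h1 := fin2_eq_zero (hcon b hb')
            rwa [Sym2.eq_swap] at h1
        · rcases Set.mem_insert_iff.mp hb with hb' | hb'
          · subst hb'
            exact fin2_eq_zero (hcon a ha')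
          · exact hM.prop.2 a ha' b hb' hab
    have hsub := hM.2 hins (Set.subset_insert y M)
    exact hyM (hsub (Set.mem_insert y M))

/-- A maximal 0-homogeneous subset of `S`. -/
noncomputable def MH (S : Set A) : Set A := (exists_maxHom c S).choose

lemma MH_subset (S : Set A) : MH c S ⊆ S := (exists_maxHom c S).choose_spec.1

lemma MH_homog0 (S : Set A) : homog0 c (MH c S) := (exists_maxHom c S).choose_spec.2.1

lemma MH_max (S : Set A) : ∀ y ∈ S, y ∉ MH c S → ∃ x ∈ MH c S, c s(x, y) = 1 :=
  (exists_maxHom c S).choose_spec.2.2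

open Classical in
/-- Pick an element of `S` joined with color 1 to `y`, if one exists. -/
noncomputable def pick (S : Set A) (y : A) : Option A :=
  if h : ∃ x ∈ S, c s(x, y) = 1 then some h.choose else none

lemma pick_eq_some {S : Set A} {y x : A} (h : pick c S y = some x) :
    x ∈ S ∧ c s(x, y) = 1 := by
  unfold pick at h
  split_ifs at h with hex
  · cases h
    exact ⟨hex.choose_spec.1, hex.choose_spec.2⟩

lemma pick_isSome {S : Set A} {y : A} (h : ∃ x ∈ S, c s(x, y) = 1) :
    (pick c S y).isSome := by
  unfold pick
  rw [dif_pos h]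
  rfl

open Classical in
/-- The descent process. -/
noncomputable def g : Ordinal.{u} → A → Option A :=
  Ordinal.lt_wf.fix (C := fun _ => A → Option A) fun ν rec y =>
    if (∀ μ (h : μ < ν), (rec μ h y).isSome) ∧
        y ∉ MH c {z | (∀ μ (h : μ < ν), (rec μ h z).isSome) ∧
          ∀ μ (h : μ < ν), rec μ h z = rec μ h y}
    then pick c (MH c {z | (∀ μ (h : μ < ν), (rec μ h z).isSome) ∧
        ∀ μ (h : μ < ν), rec μ h z = rec μ h y}) y
    else none

/-- `y` is still alive at stage `ν`. -/
def Alive (ν : Ordinal.{u}) (y : A) : Prop := ∀ μ (_ : μ < ν), (g c μ y).isSome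

/-- The class of `y` at stage `ν`. -/
def Cls (ν : Ordinal.{u}) (y : A) : Set A :=
  {z | Alive c ν z ∧ ∀ μ (_ : μ < ν), g c μ z = g c μ y}

open Classical in
lemma g_def (ν : Ordinal.{u}) (y : A) :
    g c ν y = if Alive c ν y ∧ y ∉ MH c (Cls c ν y)
      then pick c (MH c (Cls c ν y)) y else none := by
  unfold g
  rw [WellFounded.fix_eq]
  rfl

lemma alive_mono {μ ν : Ordinal.{u}} (h : μ ≤ ν) {y : A} (hy : Alive c ν y) : Alive c μ y :=
  fun μ' hμ' => hy μ' (lt_of_lt_of_le hμ' h)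

lemma mem_cls_self {ν : Ordinal.{u}} {y : A} (h : Alive c ν y) : y ∈ Cls c ν y :=
  ⟨h, fun _ _ => rfl⟩

lemma cls_eq_of_mem {ν : Ordinal.{u}} {x y : A} (h : x ∈ Cls c ν y) :
    Cls c ν x = Cls c ν y := by
  ext z
  constructor <;> rintro ⟨hz, hm⟩
  · exact ⟨hz, fun μ hμ => (hm μ hμ).trans (h.2 μ hμ)⟩
  · exact ⟨hz, fun μ hμ => (hm μ hμ).trans (h.2 μ hμ).symm⟩

lemma g_some_spec {ν : Ordinal.{u}} {y x : A} (h : g c ν y = some x) :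
    Alive c ν y ∧ x ∈ MH c (Cls c ν y) ∧ c s(x, y) = 1 := by
  rw [g_def] at h
  split_ifs at h with hc
  exact ⟨hc.1, (pick_eq_some c h).1, (pick_eq_some c h).2⟩

lemma g_none_of_stuck {ν : Ordinal.{u}} {y : A} (h : y ∈ MH c (Cls c ν y)) :
    g c ν y = none := by
  rw [g_def, if_neg]
  rintro ⟨-, h2⟩
  exact h2 h

lemma g_isSome {ν : Ordinal.{u}} {y : A} (h1 : Alive c ν y) (h2 : y ∉ MH c (Cls c ν y)) :
    (g c ν y).isSome := by
  rw [g_def, if_pos ⟨h1, h2⟩]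
  exact pick_isSome c (MH_max c _ y (mem_cls_self c h1) h2)

/-- The nodes at level `ν` : all classes of alive elements. -/
def Nodes (ν : Ordinal.{u}) : Set (Set A) := {S | ∃ y, Alive c ν y ∧ S = Cls c ν y}


lemma nodes_lt {τ β : Cardinal.{u}} (hτreg : τ.IsRegular)
    (hβτ : StronglyBetaInaccessible β τ)
    (H0 : ∀ S : Set A, homog0 c S → #S < τ) :
    ∀ ν : Ordinal.{u}, ν < β.ord → #(Nodes c ν) < τ := by
  intro ν
  induction ν using Ordinal.induction with
  | h ν IH =>
    intro hν
    have hty : ∀ i : ν.ToType, typein (α := ν.ToType) (· < ·) i < ν := typein_lt_self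
    have hchoice : ∀ n : (Nodes c ν), ∃ y, Alive c ν y ∧ n.val = Cls c ν y := fun n => n.prop
    choose Y hY1 hY2 using hchoice
    let T : ν.ToType → Type u := fun i =>
      Σ S : (Nodes c (typein (α := ν.ToType) (· < ·) i)), (MH c S.val)
    let F : (Nodes c ν) → ∀ i, T i := fun n i =>
      ⟨⟨Cls c (typein (α := ν.ToType) (· < ·) i) (Y n),
          ⟨Y n, alive_mono c (le_of_lt (hty i)) (hY1 n), rfl⟩⟩,
        ⟨(g c (typein (α := ν.ToType) (· < ·) i) (Y n)).get (hY1 n _ (hty i)),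
          (g_some_spec c (Option.some_get (hY1 n _ (hty i))).symm).2.1⟩⟩
    have hFinj : Function.Injective F := by
      intro n1 n2 hF
      have key : ∀ μ, μ < ν → g c μ (Y n1) = g c μ (Y n2) := by
        intro μ hμ
        have hμ' : μ < type (α := ν.ToType) (· < ·) := by rwa [type_toType]
        set i := enum (α := ν.ToType) (· < ·) ⟨μ, hμ'⟩ with hi
        have hti : typein (α := ν.ToType) (· < ·) i = μ := typein_enum _ _
        have h1 : (F n1 i).2.val = (F n2 i).2.val := by rw [hF]
        have h2 := congrArg some h1
        simp only [F, Option.some_get] at h2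
        rwa [hti] at h2
      apply Subtype.ext
      rw [hY2 n1, hY2 n2]
      ext z
      constructor <;> rintro ⟨hz, hm⟩
      · exact ⟨hz, fun μ hμ => (hm μ hμ).trans (key μ hμ)⟩
      · exact ⟨hz, fun μ hμ => (hm μ hμ).trans (key μ hμ).symm⟩
    have hcard : #(Nodes c ν) ≤ prod fun i => #(T i) := by
      rw [← mk_pi]
      exact mk_le_of_injective hFinj
    have hT : ∀ i, #(T i) < τ := by
      intro i
      have : #(T i) = sum fun S : (Nodes c (typein (α := ν.ToType) (· < ·) i)) =>
          #(MH c S.val) := mk_sigma _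
      rw [this]
      exact sum_lt_of_isRegular hτreg (IH _ (hty i) ((hty i).trans hν))
        fun S => H0 _ (MH_homog0 c _)
    have hι : #ν.ToType < β := by
      rw [mk_toType]
      exact Cardinal.lt_ord.1 hν
    have hsup : (⨆ i, #(T i)) < τ :=
      iSup_lt_of_isRegular hτreg (hι.trans hβτ.1) hT
    calc #(Nodes c ν) ≤ prod fun i => #(T i) := hcard
      _ ≤ prod fun _ : ν.ToType => ⨆ i, #(T i) :=
          prod_le_prod _ _ fun i => le_ciSup (Cardinal.bddAbove_range _) i
      _ = (⨆ i, #(T i)) ^ #ν.ToType := prod_const' _ _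
      _ < τ := hβτ.2 _ hsup _ hι

end DMAux

/-- If `ω ≤ β`, `β` and `τ` are regular, `τ` is strongly `β`-inaccessible and `κ < τ`,
then `τ → (τ, β)²`. -/
theorem partition_of_strongly_inaccessible (β τ κ : Cardinal.{u})
    (hβ : ℵ₀ ≤ β) (hβreg : β.IsRegular) (hτreg : τ.IsRegular)
    (hβτ : StronglyBetaInaccessible β τ) (hκ : κ < τ)
    (A : Type u) (hA : #A = τ) (c : Sym2 A → Fin 2) :
    (∃ A₀ : Set A, #A₀ = τ ∧ ∀ x ∈ A₀, ∀ y ∈ A₀, x ≠ y → c s(x, y) = 0) ∨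
    (∃ A₁ : Set A, #A₁ = β ∧ ∀ x ∈ A₁, ∀ y ∈ A₁, x ≠ y → c s(x, y) = 1) := by
  classical
  set o := β.ord with ho
  by_cases hex : ∃ y, DMAux.Alive c o y
  · right
    obtain ⟨y, hy⟩ := hex
    set ti : o.ToType → Ordinal.{u} :=
      fun i => Ordinal.typein ((· < ·) : o.ToType → o.ToType → Prop) i with hti
    have htylt : ∀ i, ti i < o := fun i => Ordinal.typein_lt_self i
    have hsome : ∀ i, (DMAux.g c (ti i) y).isSome := fun i => hy _ (htylt i)
    set j : o.ToType → A := fun i => (DMAux.g c (ti i) y).get (hsome i) with hj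
    have hjg : ∀ i, DMAux.g c (ti i) y = some (j i) := fun i => (Option.some_get (hsome i)).symm
    have hpair : ∀ i i', ti i < ti i' → j i ≠ j i' ∧ c s(j i, j i') = 1 := by
      intro i i' hlt
      have h1 := DMAux.g_some_spec c (hjg i)
      have h1' := DMAux.g_some_spec c (hjg i')
      have hcl : j i' ∈ DMAux.Cls c (ti i') y := DMAux.MH_subset c _ h1'.2.1
      have hgi : DMAux.g c (ti i) (j i') = some (j i) := by
        rw [hcl.2 _ hlt]; exact hjg i
      have h2 := DMAux.g_some_spec c hgi
      have hclI : j i ∈ DMAux.Cls c (ti i) y := DMAux.MH_subset c _ h1.2.1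
      have hstuck : DMAux.g c (ti i) (j i) = none := by
        apply DMAux.g_none_of_stuck
        rw [DMAux.cls_eq_of_mem c hclI]
        exact h1.2.1
      refine ⟨?_, h2.2.2⟩
      intro heq
      rw [← heq, hstuck] at hgi
      cases hgi
    have hinj : Function.Injective j := by
      intro i i' heq
      by_contra hne
      have hne' : ti i ≠ ti i' := fun h => hne (Ordinal.typein_injective _ h)
      rcases hne'.lt_or_gt with h | h
      · exact (hpair i i' h).1 heq
      · exact (hpair i' i h).1 heq.symm
    refine ⟨Set.range j, ?_, ?_⟩
    · rw [Cardinal.mk_range_eq j hinj, Cardinal.mk_toType, ho, Cardinal.card_ord]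
    · rintro x ⟨i, rfl⟩ x' ⟨i', rfl⟩ hne
      have hne' : ti i ≠ ti i' := fun h => hne (congrArg j (Ordinal.typein_injective _ h))
      rcases hne'.lt_or_gt with h | h
      · exact (hpair i i' h).2
      · rw [Sym2.eq_swap]; exact (hpair i' i h).2
  · by_cases H0 : ∀ S : Set A, DMAux.homog0 c S → #S < τ
    · exfalso
      have hdeath : ∀ y : A, ∃ μ, μ < o ∧ DMAux.Alive c μ y ∧
          y ∈ DMAux.MH c (DMAux.Cls c μ y) := by
        intro y
        have hnal : ¬ DMAux.Alive c o y := fun h => hex ⟨y, h⟩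
        rw [DMAux.Alive] at hnal
        push_neg at hnal
        obtain ⟨μ1, hμ1, hnone1⟩ := hnal
        have hnone1' : DMAux.g c μ1 y = none := Option.not_isSome_iff_eq_none.mp hnone1
        set s : Set Ordinal.{u} := {μ | DMAux.g c μ y = none} with hs
        have hne : s.Nonempty := ⟨μ1, hnone1'⟩
        set μ0 := Ordinal.lt_wf.min s hne with hμ0def
        have hmem : DMAux.g c μ0 y = none := Ordinal.lt_wf.min_mem s hne
        have halive : DMAux.Alive c μ0 y := fun μ hμ =>
          Option.ne_none_iff_isSome.mp (fun h => (Ordinal.lt_wf.not_lt_min s h) hμ)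
        have hμ0lt : μ0 < o := by
          rcases lt_or_ge μ0 o with h | h
          · exact h
          · exact absurd (lt_of_lt_of_le hμ1 h) (Ordinal.lt_wf.not_lt_min s hnone1')
        have hstuck : y ∈ DMAux.MH c (DMAux.Cls c μ0 y) := by
          by_contra hnot
          have hb := DMAux.g_isSome c halive hnot
          rw [hmem] at hb
          simp at hb
        exact ⟨μ0, hμ0lt, halive, hstuck⟩
      have hcover : (Set.univ : Set A) ⊆
          ⋃ i : o.ToType, ⋃ S ∈ DMAux.Nodes c
            (Ordinal.typein ((· < ·) : o.ToType → o.ToType → Prop) i), DMAux.MH c S := by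
        intro y _
        obtain ⟨μ, hμo, hal, hMHy⟩ := hdeath y
        have hμ' : μ < Ordinal.type ((· < ·) : o.ToType → o.ToType → Prop) := by
          rwa [Ordinal.type_toType]
        refine Set.mem_iUnion.mpr ⟨Ordinal.enum _ ⟨μ, hμ'⟩, ?_⟩
        simp only [Ordinal.typein_enum]
        exact Set.mem_biUnion ⟨y, hal, rfl⟩ hMHy
      have hβo : #o.ToType = β := by rw [Cardinal.mk_toType, ho, Cardinal.card_ord]
      have hbound : #(Set.univ : Set A) < τ := by
        refine lt_of_le_of_lt (Cardinal.mk_le_mk_of_subset hcover) ?_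
        refine lt_of_le_of_lt (Cardinal.mk_iUnion_le _) ?_
        have hI : ∀ i : o.ToType, #(⋃ S ∈ DMAux.Nodes c
            (Ordinal.typein ((· < ·) : o.ToType → o.ToType → Prop) i), DMAux.MH c S) < τ := by
          intro i
          refine lt_of_le_of_lt (Cardinal.mk_biUnion_le _ _) ?_
          have hn := DMAux.nodes_lt c hτreg hβτ H0 _ (Ordinal.typein_lt_self i)
          exact Cardinal.mul_lt_of_lt hτreg.aleph0_le hn
            (Cardinal.iSup_lt_of_isRegular hτreg hn fun S => H0 _ (DMAux.MH_homog0 c _))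
        refine Cardinal.mul_lt_of_lt hτreg.aleph0_le (by rw [hβo]; exact hβτ.1) ?_
        exact Cardinal.iSup_lt_of_isRegular hτreg (by rw [hβo]; exact hβτ.1) hI
      rw [Cardinal.mk_univ, hA] at hbound
      exact lt_irrefl τ hbound
    · left
      push_neg at H0
      obtain ⟨S, hS0, hge⟩ := H0
      obtain ⟨P, hP⟩ := Cardinal.le_mk_iff_exists_set.mp hge
      refine ⟨Subtype.val '' P, ?_, ?_⟩
      · rw [Cardinal.mk_image_eq Subtype.val_injective]; exact hP
      · rintro x ⟨⟨x', hx'⟩, -, rfl⟩ z ⟨⟨z', hz'⟩, -, rfl⟩ hne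
        exact hS0 x' hx' z' hz' hne
end

section
/- If n < ω ≤ κ < λ and λ is regular, then the polarized partition relation (λ, κ) → ((λ, n), (κ, κ)) holds: for all sets A of cardinality λ, B of cardinality κ, and every c : A × B → 2, either there exist A' ⊆ A of cardinality λ and B' ⊆ B of cardinality n with c constantly 0 on A' × B', or there exist A'' ⊆ A and B'' ⊆ B each of cardinality κ with c constantly 1 on A'' × B''. -/
open Cardinal

/-- Erdős–Hajnal–Rado: if `n < ω ≤ κ < λ` and `λ` is regular, then
`(λ, κ) → ((λ, n), (κ, κ))`. -/
theorem polarized_EHR (n : ℕ) (κ lam : Cardinal.{u})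
    (hκ : ℵ₀ ≤ κ) (hκlam : κ < lam) (hreg : lam.IsRegular)
    (A B : Type u) (hA : #A = lam) (hB : #B = κ) (c : A → B → Fin 2) :
    (∃ (A' : Set A) (B' : Set B), #A' = lam ∧ #B' = (n : Cardinal) ∧
      ∀ a ∈ A', ∀ b ∈ B', c a b = 0) ∨
    (∃ (A'' : Set A) (B'' : Set B), #A'' = κ ∧ #B'' = κ ∧
      ∀ a ∈ A'', ∀ b ∈ B'', c a b = 1) := by
  classical
  have hlam_inf : ℵ₀ ≤ lam := hκ.trans hκlam.le
  have hB_inf : Infinite B := by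
    rw [Cardinal.infinite_iff, hB]; exact hκ
  have hFinsetB : #(Finset B) = κ := by
    rw [Cardinal.mk_finset_of_infinite, hB]
  have hcof : #(Finset B) < lam.ord.cof := by
    rw [hreg.cof_eq, hFinsetB]; exact hκlam
  set S : Set A := {a | ∃ s : Finset B, s.card = n ∧ ∀ b ∈ s, c a b = 0} with hSdef
  have hsplit : #S = lam ∨ #(Sᶜ : Set A) = lam := by
    by_contra h
    push_neg at h
    have h1 : #S < lam := lt_of_le_of_ne (hA ▸ Cardinal.mk_set_le S) h.1
    have h2 : #(Sᶜ : Set A) < lam := lt_of_le_of_ne (hA ▸ Cardinal.mk_set_le _) h.2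
    have : (lam : Cardinal) < lam := by
      calc lam = #A := hA.symm
        _ = #S + #(Sᶜ : Set A) := (Cardinal.mk_sum_compl S).symm
        _ < lam := Cardinal.add_lt_of_lt hlam_inf h1 h2
    exact absurd this (lt_irrefl _)
  rcases hsplit with hS | hSc
  · -- left case: λ many points have an n-element 0-set
    left
    have hSinf : ℵ₀ ≤ #S := hS ▸ hlam_inf
    set g : S → Finset B := fun a => a.2.choose with hg
    have hgspec : ∀ a : S, (g a).card = n ∧ ∀ b ∈ g a, c a.1 b = 0 := fun a => a.2.choose_spec
    obtain ⟨s, hs⟩ := Cardinal.infinite_pigeonhole g hSinf (hS ▸ hcof)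
    -- the fiber is nonempty if lam > 0
    have hfibpos : #(g ⁻¹' {s}) ≠ 0 := by
      rw [hs, hS]; exact hreg.pos.ne'
    have hfib_ne : (g ⁻¹' {s}).Nonempty := by
      rw [Set.nonempty_iff_ne_empty]
      intro h; rw [h] at hfibpos; simp at hfibpos
    obtain ⟨a₀, ha₀⟩ := hfib_ne
    refine ⟨Subtype.val '' (g ⁻¹' {s}), (↑s : Set B), ?_, ?_, ?_⟩
    · rw [Cardinal.mk_image_eq Subtype.val_injective, hs, hS]
    · have hgs : g a₀ = s := ha₀
      rw [← hgs]
      simp [Finset.coe_sort_coe, Cardinal.mk_coe_finset, (hgspec a₀).1]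
    · rintro a ⟨x, hx, rfl⟩ b hb
      have hgx : g x = s := hx
      exact (hgspec x).2 b (by rwa [hgx])
  · -- right case
    right
    have hScinf : ℵ₀ ≤ #(Sᶜ : Set A) := hSc ▸ hlam_inf
    have hfin : ∀ a : (Sᶜ : Set A), {b | c a.1 b = 0}.Finite := by
      intro a
      by_contra hinf
      obtain ⟨t, hts, htc⟩ := (show Set.Infinite _ from hinf).exists_subset_card_eq n
      exact a.2 ⟨t, htc, fun b hb => hts hb⟩
    set g : (Sᶜ : Set A) → Finset B := fun a => (hfin a).toFinset with hg
    obtain ⟨s, hs⟩ := Cardinal.infinite_pigeonhole g hScinf (hSc ▸ hcof)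
    have hfibcard : #(g ⁻¹' {s}) = lam := by rw [hs, hSc]
    -- choose a subset of the fiber of size κ
    have hκle : κ ≤ #(Subtype.val '' (g ⁻¹' {s}) : Set A) := by
      rw [Cardinal.mk_image_eq Subtype.val_injective, hfibcard]
      exact hκlam.le
    obtain ⟨A'', hA''sub, hA''card⟩ := Cardinal.le_mk_iff_exists_subset.mp hκle
    refine ⟨A'', (↑s : Set B)ᶜ, hA''card, ?_, ?_⟩
    · have hslt : #(↑s : Set B) < #B := by
        rw [show #(↑s : Set B) = (s.card : Cardinal) by simp [Finset.coe_sort_coe, Cardinal.mk_coe_finset], hB]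
        exact lt_of_lt_of_le (Cardinal.nat_lt_aleph0 _) hκ
      rw [Cardinal.mk_compl_of_infinite _ hslt, hB]
    · intro a ha b hb
      obtain ⟨x, hx, rfl⟩ := hA''sub ha
      have hgx : g x = s := hx
      have hb0 : c x.1 b ≠ 0 := by
        intro h0
        apply hb
        have : b ∈ g x := by rw [hg]; simp [Set.Finite.mem_toFinset]; exact h0
        rwa [hgx] at this
      omega
end
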